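/- Let n ≥ 4 and let R ∈ S²_B(so(n)) be a curvature operator of Ricci type, i.e. R = (λ̄/(n−1))·I + (2/(n−2))·(Ric₀∧id). Then the Weyl part of R² + R^# equals (1/(n−2)) times the Weyl part of Ric₀∧Ric₀; that is, (R² + R^#)_W = (1/(n−2))·(Ric₀∧Ric₀)_W. -/

import Mathlib

/-!
Common setup: we identify ⋀²ℝⁿ with the Lie algebra `so n` of real skew-symmetric
`n × n` matrices, sending `eᵢ ∧ eⱼ` to the rotation by `π/2` in the plane spanned by
`eᵢ, eⱼ`; the inner product on `so n` is `⟪A, B⟫ = -(1/2)·tr (A * B)`, and under this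
identification `v ∧ w` corresponds to the skew-symmetric matrix `v wᵀ - w vᵀ`, while
the wedge `A ∧ B` of two endomorphisms of `ℝⁿ` acts on a skew matrix `M` by
`M ↦ (1/2)(A M Bᵀ + B M Aᵀ)` (the unique linear extension of
`v∧w ↦ (1/2)(Av ∧ Bw + Bv ∧ Aw)`).
-/

noncomputable section

namespace BW

open Matrix

abbrev Mat (n : ℕ) := Matrix (Fin n) (Fin n) ℝ

/-- `so n`: the space of real skew-symmetric `n × n` matrices (≅ ⋀²ℝⁿ). -/
def so (n : ℕ) : Submodule ℝ (Mat n) where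
  carrier := {A | Aᵀ = -A}
  add_mem' := by
    intro A B hA hB
    simp only [Set.mem_setOf_eq] at *
    rw [Matrix.transpose_add, hA, hB, neg_add]
  zero_mem' := by simp
  smul_mem' := by
    intro c A hA
    simp only [Set.mem_setOf_eq] at *
    rw [Matrix.transpose_smul, hA, smul_neg]

variable {n : ℕ}

lemma mem_so_iff {A : Mat n} : A ∈ so n ↔ Aᵀ = -A := Iff.rfl

/-- The inner product `⟨A,B⟩ = -(1/2)·tr(AB)` on `so n`. -/
def ip (A B : so n) : ℝ := -(1/2) * Matrix.trace ((A : Mat n) * (B : Mat n))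

/-- `ip` as a linear map in the second variable. -/
def ipL (A : so n) : so n →ₗ[ℝ] ℝ where
  toFun B := ip A B
  map_add' B C := by
    simp only [ip, Submodule.coe_add, Matrix.mul_add, Matrix.trace_add]; ring
  map_smul' c B := by
    simp only [ip, SetLike.val_smul, Matrix.mul_smul, Matrix.trace_smul, smul_eq_mul,
      RingHom.id_apply]; ring

/-- The Lie bracket (matrix commutator) on `so n`. -/
def brk (A B : so n) : so n :=
  ⟨(A : Mat n) * (B : Mat n) - (B : Mat n) * (A : Mat n), by
    have hA : (A : Mat n)ᵀ = -(A : Mat n) := A.2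
    have hB : (B : Mat n)ᵀ = -(B : Mat n) := B.2
    rw [mem_so_iff, Matrix.transpose_sub, Matrix.transpose_mul, Matrix.transpose_mul, hA, hB]
    noncomm_ring⟩

/-- Auxiliary linear map underlying `A ∧ B`. -/
def wedgeAux (A B : Mat n) : Mat n →ₗ[ℝ] Mat n where
  toFun M := (1/2 : ℝ) • (A * M * Bᵀ + B * M * Aᵀ)
  map_add' M N := by
    simp only [mul_add, add_mul, smul_add]
    module
  map_smul' c M := by
    simp only [mul_smul_comm, smul_mul_assoc, RingHom.id_apply]
    module

lemma wedgeAux_mem (A B : Mat n) : ∀ M ∈ so n, wedgeAux A B M ∈ so n := by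
  intro M hM
  rw [mem_so_iff] at hM ⊢
  show ((1/2 : ℝ) • (A * M * Bᵀ + B * M * Aᵀ))ᵀ = -((1/2 : ℝ) • (A * M * Bᵀ + B * M * Aᵀ))
  rw [Matrix.transpose_smul, Matrix.transpose_add, Matrix.transpose_mul, Matrix.transpose_mul,
    Matrix.transpose_mul, Matrix.transpose_mul, Matrix.transpose_transpose,
    Matrix.transpose_transpose, hM]
  simp only [Matrix.neg_mul, Matrix.mul_neg, Matrix.mul_assoc, smul_neg, neg_add, smul_add]
  abel

/-- The wedge `A ∧ B` of two endomorphisms of ℝⁿ, as an endomorphism of `so n ≅ ⋀²ℝⁿ`: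
the unique linear map with `(A ∧ B)(v ∧ w) = (1/2)(Av ∧ Bw + Bv ∧ Aw)`. -/
def wedge (A B : Mat n) : Module.End ℝ (so n) :=
  (wedgeAux A B).restrict (p := so n) (q := so n) (wedgeAux_mem A B)

/-- The index set of pairs `i < j`. -/
def pairs (n : ℕ) : Finset (Fin n × Fin n) := Finset.univ.filter fun p => p.1 < p.2

/-- The standard basis vector `eᵢ` of ℝⁿ. -/
def evec (i : Fin n) : Fin n → ℝ := fun k => if k = i then 1 else 0

/-- `v ∧ w`, as an element of `so n ≅ ⋀²ℝⁿ`. -/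
def vwedge (v w : Fin n → ℝ) : so n :=
  ⟨Matrix.of fun i j => v i * w j - w i * v j, by
    rw [mem_so_iff]
    ext i j
    simp only [Matrix.transpose_apply, Matrix.of_apply, Matrix.neg_apply]
    ring⟩

/-- The orthonormal basis vector `eᵢ ∧ eⱼ` of `so n ≅ ⋀²ℝⁿ`. -/
def bvec (i j : Fin n) : so n := vwedge (evec i) (evec j)

/-- Hamilton's sharp product `R # S`: the self-adjoint endomorphism of `so n` determined by
`⟨(R#S)h, h⟩ = (1/2)·Σ_{α,β} ⟨[R(b_α), S(b_β)], h⟩·⟨[b_α, b_β], h⟩`,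
where `(b_α)` is the orthonormal basis `(eᵢ ∧ eⱼ)_{i<j}` of `so n`. -/
def sharp (R S : Module.End ℝ (so n)) : Module.End ℝ (so n) :=
  (1/4 : ℝ) • ∑ p ∈ pairs n, ∑ q ∈ pairs n,
    ((ipL (brk (R (bvec p.1 p.2)) (S (bvec q.1 q.2)))).smulRight
        (brk (bvec p.1 p.2) (bvec q.1 q.2))
      + (ipL (brk (bvec p.1 p.2) (bvec q.1 q.2))).smulRight
        (brk (R (bvec p.1 p.2)) (S (bvec q.1 q.2))))

/-- The right-hand side `R² + R^#` of Hamilton's ODE. -/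
def Qode (R : Module.End ℝ (so n)) : Module.End ℝ (so n) := R * R + sharp R R

/-- The coordinates `R_{ijkl} = ⟨R(eᵢ∧eⱼ), e_k∧e_l⟩` of an endomorphism of `so n`. -/
def Rcoord (R : Module.End ℝ (so n)) (i j k l : Fin n) : ℝ := ip (R (bvec i j)) (bvec k l)

/-- Self-adjointness with respect to the inner product `ip`. -/
def selfAdjEnd (R : Module.End ℝ (so n)) : Prop := ∀ X Y : so n, ip (R X) Y = ip X (R Y)

/-- A curvature operator: a self-adjoint endomorphism of `so n ≅ ⋀²ℝⁿ` satisfying the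
first Bianchi identity.  (`isCurvOp` carves out `S²_B(so n)`.) -/
def isCurvOp (R : Module.End ℝ (so n)) : Prop :=
  selfAdjEnd R ∧
    ∀ i j k l : Fin n, Rcoord R i j k l + Rcoord R j k i l + Rcoord R k i j l = 0

/-- The Ricci tensor `Ric_{ij} = Σ_k R_{ikjk}` of `R`. -/
def RicM (R : Module.End ℝ (so n)) : Mat n := Matrix.of fun i j => ∑ k, Rcoord R i k j k

/-- `λ̄ = tr(Ric)/n`. -/
def lamb (R : Module.End ℝ (so n)) : ℝ := Matrix.trace (RicM R) / (n : ℝ)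

/-- The traceless Ricci tensor `Ric₀ = Ric - (tr Ric / n)·id`. -/
def Ric0 (R : Module.End ℝ (so n)) : Mat n := RicM R - lamb R • (1 : Mat n)

/-- `σ = tr(Ric₀²)/n`. -/
def sigmaR (R : Module.End ℝ (so n)) : ℝ := Matrix.trace (Ric0 R * Ric0 R) / (n : ℝ)

/-- `R_I = (λ̄/(n-1))·(id ∧ id)`, the projection of `R` onto `⟨I⟩`. -/
def RI (R : Module.End ℝ (so n)) : Module.End ℝ (so n) :=
  (lamb R / ((n : ℝ) - 1)) • wedge (1 : Mat n) (1 : Mat n)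

/-- `R_{Ric₀} = (2/(n-2))·(Ric₀ ∧ id)`, the projection of `R` onto `⟨Ric₀⟩`. -/
def RRic0 (R : Module.End ℝ (so n)) : Module.End ℝ (so n) :=
  (2 / ((n : ℝ) - 2)) • wedge (Ric0 R) (1 : Mat n)

/-- The linear map `ℓ_{a,b}(R) = R + 2(n-1)a·R_I + (n-2)b·R_{Ric₀}`. -/
def lab (a b : ℝ) (R : Module.End ℝ (so n)) : Module.End ℝ (so n) :=
  R + (2 * ((n : ℝ) - 1) * a) • RI R + (((n : ℝ) - 2) * b) • RRic0 R

/-- Positive semidefiniteness of the quadratic form of an endomorphism of `so n`. -/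
def posSemidefEnd (R : Module.End ℝ (so n)) : Prop := ∀ X : so n, 0 ≤ ip (R X) X

/-- Positive definiteness of the quadratic form of an endomorphism of `so n`. -/
def posDefEnd (R : Module.End ℝ (so n)) : Prop := ∀ X : so n, X ≠ 0 → 0 < ip (R X) X

/-- `R` is 2-nonnegative: the sum of its two smallest eigenvalues is nonnegative;
equivalently (Ky Fan), `q_R(X) + q_R(Y) ≥ 0` for all orthonormal pairs `X, Y`. -/
def twoNonneg (R : Module.End ℝ (so n)) : Prop :=
  ∀ X Y : so n, ip X X = 1 → ip Y Y = 1 → ip X Y = 0 → 0 ≤ ip (R X) X + ip (R Y) Y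

/-- The (Frobenius) norm of an endomorphism of `so n`, computed in the orthonormal
basis `(eᵢ ∧ eⱼ)_{i<j}`. -/
def endNorm (R : Module.End ℝ (so n)) : ℝ :=
  Real.sqrt (∑ p ∈ pairs n, ip (R (bvec p.1 p.2)) (R (bvec p.1 p.2)))

/-- The tangent cone `T_R C`: the closure of `{t·(S - R) : S ∈ C, t ≥ 0}`. -/
def tangCone (C : Set (Module.End ℝ (so n))) (R : Module.End ℝ (so n)) :
    Set (Module.End ℝ (so n)) :=
  {X | ∀ ε > 0, ∃ S ∈ C, ∃ t : ℝ, 0 ≤ t ∧ endNorm (X - t • (S - R)) < ε}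

/-- `C` is a closed subset of the space of endomorphisms of `so n`. -/
def isClosedSet (C : Set (Module.End ℝ (so n))) : Prop :=
  ∀ X, (∀ ε > 0, ∃ Y ∈ C, endNorm (X - Y) < ε) → X ∈ C

/-- The interior of `C` relative to the subspace `S²_B(so n)` of curvature operators. -/
def interiorCurv (C : Set (Module.End ℝ (so n))) : Set (Module.End ℝ (so n)) :=
  {X | isCurvOp X ∧ ∃ ε > 0, ∀ Y, isCurvOp Y → endNorm (Y - X) < ε → Y ∈ C}

/-- Auxiliary linear map `M ↦ g M gᵀ` on matrices. -/
def conjAux (g : Mat n) : Mat n →ₗ[ℝ] Mat n where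
  toFun M := g * M * gᵀ
  map_add' M N := by simp only [mul_add, add_mul]
  map_smul' c M := by simp only [mul_smul_comm, smul_mul_assoc, RingHom.id_apply]

/-- `⋀²g` : the action `M ↦ g M gᵀ` of `g` on `so n ≅ ⋀²ℝⁿ` (for `g` orthogonal this is
the second exterior power of `g`). -/
def conjSo (g : Mat n) : Module.End ℝ (so n) :=
  (conjAux g).restrict (p := so n) (q := so n) (fun M hM => by
    rw [mem_so_iff] at hM ⊢
    show (g * M * gᵀ)ᵀ = -(g * M * gᵀ)
    rw [Matrix.transpose_mul, Matrix.transpose_mul, Matrix.transpose_transpose, hM]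
    simp only [Matrix.neg_mul, Matrix.mul_neg, Matrix.mul_assoc])

/-- The action `g · R = (⋀²g) ∘ R ∘ (⋀²g)⁻¹` of an orthogonal matrix `g`
(whose inverse is `gᵀ`) on endomorphisms of `so n`. -/
def onAct (g : Mat n) (R : Module.End ℝ (so n)) : Module.End ℝ (so n) :=
  conjSo g * R * conjSo gᵀ

/-- Two sets are at Hausdorff distance at most `ε` from each other. -/
def hdClose (A B : Set (Module.End ℝ (so n))) (ε : ℝ) : Prop :=
  (∀ X ∈ A, ∃ Y ∈ B, endNorm (X - Y) ≤ ε) ∧ ∀ Y ∈ B, ∃ X ∈ A, endNorm (X - Y) ≤ ε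

/-- The truncation `C ∩ {‖R‖ ≤ 1}`. -/
def truncSet (C : Set (Module.End ℝ (so n))) : Set (Module.End ℝ (so n)) :=
  {R ∈ C | endNorm R ≤ 1}

/-- The Weyl part `S_W = S - S_I - S_{Ric₀}` of an endomorphism of `so n`. -/
def weylPart (S : Module.End ℝ (so n)) : Module.End ℝ (so n) := S - RI S - RRic0 S

/-!
A curvature operator of Ricci type is `R = a·I + c·(A ∧ id)` with `A = Ric₀` symmetric and
traceless; on skew matrices it acts by `X ↦ a X + (c/2)(A X + X A)`. Collapsing one of the two
sums defining `R^#` by the orthonormal expansion, and contracting the other with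
`∑ᵢⱼ bᵢⱼ V bᵢⱼ = 2 Vᵀ - 2 tr V · 1` (where `bᵢⱼ = eᵢ ∧ eⱼ`), shows that `R² + R^#` is a linear
combination of `I`, `A ∧ id`, `A ∧ A` and `A² ∧ id`. The Weyl part is linear and kills `P ∧ id`
for every symmetric `P`, so only the coefficient `c²(n-2)/4 = 1/(n-2)` of `A ∧ A` survives.
-/

lemma trace_mul_eq_zero_of_symm_skew {S N : Mat n} (hS : Sᵀ = S) (hN : Nᵀ = -N) :
    trace (S * N) = 0 := by
  have h := trace_transpose (S * N)
  rw [transpose_mul, hS, hN, Matrix.neg_mul, trace_neg, trace_mul_comm] at h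
  linarith

abbrev bmat (i j : Fin n) : Mat n := (bvec i j : Mat n)

lemma bmat_apply (i j k l : Fin n) :
    bmat i j k l = (if k = i ∧ l = j then 1 else 0) - (if k = j ∧ l = i then 1 else 0) := by
  simp only [bmat, bvec, vwedge, evec, of_apply, ite_and]
  split_ifs <;> simp

lemma bvec_swap (i j : Fin n) : bvec j i = -bvec i j :=
  Subtype.ext <| Matrix.ext fun k l => by
    simp only [bvec, vwedge, NegMemClass.coe_neg, Matrix.neg_apply, Matrix.of_apply]
    ring

lemma bvec_self (i : Fin n) : bvec i i = 0 := by
  ext k l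
  simp [bmat_apply]

lemma coe_brk (x y : so n) : (brk x y : Mat n) = ⁅(x : Mat n), (y : Mat n)⁆ := rfl

lemma coe_wedge_apply (P Q : Mat n) (x : so n) :
    (wedge P Q x : Mat n) = (1 / 2 : ℝ) • (P * x * Qᵀ + Q * x * Pᵀ) := rfl

lemma ip_comm (x y : so n) : ip x y = ip y x := by
  rw [ip, ip, trace_mul_comm]

lemma ip_bvec (x : so n) (k l : Fin n) : ip x (bvec k l) = (x : Mat n) k l := by
  have hx : (x : Mat n) l k = -(x : Mat n) k l := by
    rw [← transpose_apply (x : Mat n) k l, x.2, neg_apply]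
  have htr : trace ((x : Mat n) * bmat k l) = (x : Mat n) l k - (x : Mat n) k l := by
    simp only [trace, diag, mul_apply, bmat_apply, ite_and, mul_sub, mul_ite, mul_one, mul_zero,
      Finset.sum_sub_distrib, Finset.sum_ite_eq', Finset.mem_univ, if_true]
  rw [ip, htr, hx]
  ring

lemma ip_brk (u v x : so n) : ip (brk u v) x = ip v (brk x u) := by
  simp only [ip, coe_brk, Ring.lie_def, Matrix.sub_mul, Matrix.mul_sub, trace_sub, mul_assoc]
  rw [trace_mul_comm (u : Mat n), mul_assoc]

lemma brk_sum_smul (u : so n) {ι : Type*} (s : Finset ι) (c : ι → ℝ) (v : ι → so n) :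
    ∑ q ∈ s, c q • brk u (v q) = brk u (∑ q ∈ s, c q • v q) := by
  ext : 1
  simp only [coe_brk, Submodule.coe_sum, Submodule.coe_smul, Ring.lie_def, Finset.mul_sum,
    Finset.sum_mul, mul_smul_comm, smul_mul_assoc, ← Finset.sum_sub_distrib, ← smul_sub]

lemma brk_neg_left (x y : so n) : brk (-x) y = -brk x y := by
  ext : 1
  simp [coe_brk, Ring.lie_def]
  abel

lemma brk_neg_right (x y : so n) : brk x (-y) = -brk x y := by
  ext : 1
  simp [coe_brk, Ring.lie_def]
  abel

lemma sum_pairs_eq_half_sum {M : Type*} [AddCommGroup M] [Module ℝ M] (f : so n → M)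
    (h0 : f 0 = 0) (hneg : ∀ x, f (-x) = f x) :
    ∑ p ∈ pairs n, f (bvec p.1 p.2) = (1 / 2 : ℝ) • ∑ i, ∑ j, f (bvec i j) := by
  set g : Fin n × Fin n → M := fun p => f (bvec p.1 p.2)
  have hgt : ∑ p ∈ Finset.univ.filter (fun p : Fin n × Fin n => p.2 < p.1), g p
      = ∑ p ∈ pairs n, g p :=
    Finset.sum_nbij' Prod.swap Prod.swap (by simp [pairs]) (by simp [pairs]) (by simp) (by simp)
      (fun p _ => by simp only [g, Prod.fst_swap, Prod.snd_swap, bvec_swap p.1 p.2, hneg])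
  have hdiag :
      ∑ p ∈ Finset.univ.filter (fun p : Fin n × Fin n => ¬p.2 < p.1 ∧ ¬p.1 < p.2), g p = 0 :=
    Finset.sum_eq_zero fun p hp => by
      obtain ⟨h1, h2⟩ := (Finset.mem_filter.mp hp).2
      simp only [g, le_antisymm (not_lt.mp h2) (not_lt.mp h1), bvec_self, h0]
  have hpairs :
      Finset.univ.filter (fun p : Fin n × Fin n => ¬p.2 < p.1 ∧ p.1 < p.2) = pairs n := by
    ext p
    simp only [pairs, Finset.mem_filter, Finset.mem_univ, true_and, and_iff_right_iff_imp]
    exact fun h => not_lt.mpr h.le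
  have hsplit : ∑ i, ∑ j, f (bvec i j) = 2 • ∑ p ∈ pairs n, g p := by
    rw [← Finset.sum_product', Finset.univ_product_univ,
      ← Finset.sum_filter_add_sum_filter_not _ (fun p : Fin n × Fin n => p.2 < p.1), hgt,
      ← Finset.sum_filter_add_sum_filter_not (Finset.univ.filter _)
        (fun p : Fin n × Fin n => p.1 < p.2),
      Finset.filter_filter, Finset.filter_filter, hdiag, hpairs, add_zero, two_nsmul]
  rw [hsplit, ← Nat.cast_smul_eq_nsmul ℝ, smul_smul]
  norm_num

lemma sum_pairs_ip_smul_bvec (Y : so n) :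
    ∑ p ∈ pairs n, ip (bvec p.1 p.2) Y • bvec p.1 p.2 = Y := by
  rw [sum_pairs_eq_half_sum (fun x => ip x Y • x) (by simp) (fun x => by
    simp only [ip, NegMemClass.coe_neg, Matrix.neg_mul, trace_neg, mul_neg, neg_smul, smul_neg,
      neg_neg])]
  ext s t
  simp only [ip_comm _ Y, ip_bvec, Submodule.coe_smul, Submodule.coe_sum, Matrix.smul_apply,
    Matrix.sum_apply, smul_eq_mul, bmat_apply, mul_sub, mul_ite, ite_and, mul_zero, mul_one,
    Finset.sum_sub_distrib, Finset.sum_ite_eq, Finset.mem_univ, if_true, Finset.sum_ite_irrel,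
    Finset.sum_const_zero]
  rw [← transpose_apply (Y : Mat n) s t, Y.2, neg_apply]
  ring

/-- The inner sum of the definition of `R # S` collapses by ad-invariance of the inner product
and the orthonormal expansion `∑_q ⟨b_q, Y⟩ b_q = Y`. -/
lemma sharp_apply (R S : Module.End ℝ (so n)) (hS : selfAdjEnd S) (X : so n) :
    sharp R S X = (1 / 4 : ℝ) • ∑ p ∈ pairs n,
      (brk (bvec p.1 p.2) (S (brk X (R (bvec p.1 p.2))))
        + brk (R (bvec p.1 p.2)) (S (brk X (bvec p.1 p.2)))) := by
  simp only [sharp, LinearMap.smul_apply, LinearMap.sum_apply,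
    LinearMap.add_apply, LinearMap.smulRight_apply, ipL, LinearMap.coe_mk, AddHom.coe_mk]
  congr 1
  refine Finset.sum_congr rfl fun p _ => ?_
  have h1 : ∀ q : Fin n × Fin n, ip (brk (R (bvec p.1 p.2)) (S (bvec q.1 q.2))) X
      = ip (bvec q.1 q.2) (S (brk X (R (bvec p.1 p.2)))) := fun q => by
    rw [ip_brk, hS]
  have h2 : ∀ q : Fin n × Fin n, ip (brk (bvec p.1 p.2) (bvec q.1 q.2)) X
      = ip (bvec q.1 q.2) (brk X (bvec p.1 p.2)) := fun q => ip_brk _ _ _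
  simp only [Finset.sum_add_distrib, h1, h2, brk_sum_smul, sum_pairs_ip_smul_bvec]
  conv_rhs => rw [← sum_pairs_ip_smul_bvec (brk X (bvec p.1 p.2)), map_sum]
  simp only [map_smul]

lemma sum_bmat_sandwich (V : Mat n) :
    ∑ i, ∑ j, bmat i j * (V * bmat i j) = (2 : ℝ) • Vᵀ - (2 * trace V) • (1 : Mat n) := by
  ext s t
  simp only [Matrix.sum_apply, mul_apply, bmat_apply, Matrix.sub_apply, Matrix.smul_apply,
    transpose_apply, one_apply, trace, diag, smul_eq_mul]
  simp only [sub_mul, mul_sub, ite_mul, mul_ite, one_mul, mul_one, zero_mul, mul_zero, ite_and,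
    Finset.sum_sub_distrib, Finset.sum_ite_eq, Finset.sum_ite_eq', Finset.mem_univ, if_true,
    Finset.sum_ite_irrel, Finset.sum_const_zero]
  by_cases h : s = t <;> simp [h] <;> ring

lemma sum_bmat_sandwich_mul (V W : Mat n) :
    ∑ i, ∑ j, bmat i j * (V * (bmat i j * W))
      = ((2 : ℝ) • Vᵀ - (2 * trace V) • (1 : Mat n)) * W := by
  simp only [← mul_assoc, ← Finset.sum_mul]
  simp only [mul_assoc, sum_bmat_sandwich]

lemma sum_bmat_sq : ∑ i, ∑ j, bmat i j * bmat i j = (2 - 2 * (n : ℝ)) • (1 : Mat n) := by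
  have h := sum_bmat_sandwich (n := n) 1
  simp only [one_mul, transpose_one, trace_one, Fintype.card_fin] at h
  rw [h, sub_smul]

lemma sum_bmat_sq_mul (W : Mat n) :
    ∑ i, ∑ j, bmat i j * (bmat i j * W) = (2 - 2 * (n : ℝ)) • W := by
  simp only [← mul_assoc, ← Finset.sum_mul, sum_bmat_sq, smul_mul_assoc, one_mul]

/-- The matrix action `Y ↦ a Y + d (A Y + Y A)` of `a·I + 2d·(A ∧ id)` for symmetric `A`. -/
def ricciAction (A : Mat n) (a d : ℝ) (Y : Mat n) : Mat n := a • Y + d • (A * Y + Y * A)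

/-- Expanded, the summand is a combination of words `U bᵢⱼ V bᵢⱼ W` in `A`, `X`; pulling `U` out
of the sum and grouping `V` lets `sum_bmat_sandwich_mul` and its variants contract each word. -/
lemma sum_sharp_summand_ricciAction {A X : Mat n} (hA : Aᵀ = A) (htrA : trace A = 0)
    (hX : Xᵀ = -X) (a d : ℝ) :
    ∑ i, ∑ j, (⁅bmat i j, ricciAction A a d ⁅X, ricciAction A a d (bmat i j)⁆⁆
        + ⁅ricciAction A a d (bmat i j), ricciAction A a d ⁅X, bmat i j⁆⁆)
      = (8 : ℝ) • ((a ^ 2 * ((n : ℝ) - 2) + d ^ 2 * trace (A * A)) • X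
        + (a * d * ((n : ℝ) - 4)) • (A * X + X * A) + (d ^ 2 * ((n : ℝ) - 4)) • (A * X * A)
        - (2 * d ^ 2) • (A * A * X + X * (A * A))) := by
  have hAA : (A * A)ᵀ = A * A := by rw [transpose_mul, hA]
  have trX : trace X = 0 := by simpa using trace_mul_eq_zero_of_symm_skew transpose_one hX
  have trAX : trace (A * X) = 0 := trace_mul_eq_zero_of_symm_skew hA hX
  have trXA : trace (X * A) = 0 := by rw [trace_mul_comm, trAX]
  have trAAX : trace (A * (A * X)) = 0 := by
    rw [← mul_assoc]; exact trace_mul_eq_zero_of_symm_skew hAA hX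
  have trXAA : trace (X * (A * A)) = 0 := by
    rw [trace_mul_comm, trace_mul_eq_zero_of_symm_skew hAA hX]
  have trAXA : trace (A * (X * A)) = 0 := by rw [trace_mul_comm, mul_assoc, trXAA]
  have groupA : ∀ i j (P T : Mat n), bmat i j * (P * (A * T)) = bmat i j * (P * A * T) :=
    fun _ _ _ _ => by simp only [mul_assoc]
  have groupX : ∀ i j (P T : Mat n), bmat i j * (P * (X * T)) = bmat i j * (P * X * T) :=
    fun _ _ _ _ => by simp only [mul_assoc]
  simp only [ricciAction, Ring.lie_def, mul_add, add_mul, mul_sub, sub_mul, smul_add, smul_sub,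
    mul_smul_comm, smul_mul_assoc, smul_smul, mul_assoc, Finset.sum_add_distrib,
    Finset.sum_sub_distrib, ← Finset.smul_sum, ← Finset.mul_sum]
  -- contract `bᵢⱼ * bᵢⱼ` first: grouping would absorb the second `bᵢⱼ` into `V`
  simp only [sum_bmat_sq, sum_bmat_sq_mul]
  simp only [groupA, groupX]
  simp only [sum_bmat_sandwich, sum_bmat_sandwich_mul]
  simp only [transpose_mul, hA, hX, hAA, trX, trAX, trXA, trAAX, trAXA, trXAA, htrA, mul_zero,
    zero_smul, sub_zero, Matrix.neg_mul, Matrix.mul_neg, smul_neg, smul_mul_assoc, mul_smul_comm,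
    Matrix.one_mul, Matrix.mul_one, mul_assoc, mul_sub, sub_mul, smul_sub]
  module

section RicciType

def ricciType (A : Mat n) (a c : ℝ) : Module.End ℝ (so n) := a • wedge 1 1 + c • wedge A 1

variable {A : Mat n}

lemma coe_ricciType_apply (hA : Aᵀ = A) (a c : ℝ) (X : so n) :
    (ricciType A a c X : Mat n) = ricciAction A a (c / 2) X := by
  simp only [ricciType, LinearMap.add_apply, LinearMap.smul_apply, Submodule.coe_add,
    Submodule.coe_smul, coe_wedge_apply, transpose_one, hA, Matrix.one_mul, Matrix.mul_one,
    ricciAction]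
  module

lemma selfAdjEnd_ricciType (hA : Aᵀ = A) (a c : ℝ) : selfAdjEnd (ricciType A a c) := by
  intro X Y
  simp only [ip, coe_ricciType_apply hA, ricciAction, Matrix.add_mul, Matrix.mul_add,
    Matrix.smul_mul, Matrix.mul_smul, trace_add, trace_smul, mul_assoc]
  rw [trace_mul_comm A, mul_assoc, smul_eq_mul, smul_eq_mul]
  ring

lemma sharp_ricciType (hA : Aᵀ = A) (htrA : trace A = 0) (a c : ℝ) :
    sharp (ricciType A a c) (ricciType A a c)
      = (a ^ 2 * ((n : ℝ) - 2) + c ^ 2 * trace (A * A) / 4) • wedge 1 1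
        + (a * c * ((n : ℝ) - 4)) • wedge A 1 + (c ^ 2 * ((n : ℝ) - 4) / 4) • wedge A A
        - c ^ 2 • wedge (A * A) 1 := by
  ext X : 2
  rw [sharp_apply _ _ (selfAdjEnd_ricciType hA a c), sum_pairs_eq_half_sum (fun x =>
      brk x (ricciType A a c (brk X (ricciType A a c x)))
        + brk (ricciType A a c x) (ricciType A a c (brk X x)))
      (by ext : 1; simp [coe_brk, Ring.lie_def])
      (fun x => by simp only [map_neg, brk_neg_left, brk_neg_right, neg_neg])]
  have hAA : (A * A)ᵀ = A * A := by rw [transpose_mul, hA]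
  simp only [Submodule.coe_smul, Submodule.coe_sum, Submodule.coe_add, coe_brk,
    coe_ricciType_apply hA, sum_sharp_summand_ricciAction hA htrA X.2, LinearMap.sub_apply,
    LinearMap.add_apply, LinearMap.smul_apply, Submodule.coe_sub, coe_wedge_apply, transpose_one,
    hA, hAA, Matrix.one_mul, Matrix.mul_one]
  match_scalars <;> ring

lemma Qode_ricciType (hA : Aᵀ = A) (htrA : trace A = 0) (a c : ℝ) :
    Qode (ricciType A a c)
      = (a ^ 2 * ((n : ℝ) - 1) + c ^ 2 * trace (A * A) / 4) • wedge 1 1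
        + (a * c * ((n : ℝ) - 2)) • wedge A 1 + (c ^ 2 * ((n : ℝ) - 2) / 4) • wedge A A
        - (c ^ 2 / 2) • wedge (A * A) 1 := by
  rw [Qode, sharp_ricciType hA htrA]
  ext X : 2
  have hAA : (A * A)ᵀ = A * A := by rw [transpose_mul, hA]
  simp only [Module.End.mul_apply, LinearMap.add_apply, LinearMap.sub_apply,
    LinearMap.smul_apply, Submodule.coe_add, Submodule.coe_sub, Submodule.coe_smul,
    coe_ricciType_apply hA, ricciAction, coe_wedge_apply, transpose_one, hA, hAA,
    Matrix.one_mul, Matrix.mul_one, Matrix.mul_add, Matrix.add_mul, Matrix.mul_smul,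
    Matrix.smul_mul, mul_assoc]
  match_scalars <;> ring

end RicciType

lemma RicM_apply (S : Module.End ℝ (so n)) (i j : Fin n) :
    RicM S i j = ∑ k, (S (bvec i k) : Mat n) j k := by
  simp only [RicM, Rcoord, ip_bvec, of_apply]

lemma RicM_add (S T : Module.End ℝ (so n)) : RicM (S + T) = RicM S + RicM T := by
  ext i j
  simp only [RicM_apply, LinearMap.add_apply, Submodule.coe_add, Matrix.add_apply,
    Finset.sum_add_distrib]

lemma RicM_smul (c : ℝ) (S : Module.End ℝ (so n)) : RicM (c • S) = c • RicM S := by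
  ext i j
  simp only [RicM_apply, LinearMap.smul_apply, Submodule.coe_smul, Matrix.smul_apply,
    smul_eq_mul, Finset.mul_sum]

lemma RicM_sub (S T : Module.End ℝ (so n)) : RicM (S - T) = RicM S - RicM T := by
  ext i j
  simp only [RicM_apply, LinearMap.sub_apply, Submodule.coe_sub, Matrix.sub_apply,
    Finset.sum_sub_distrib]

lemma RicM_transpose {S : Module.End ℝ (so n)} (hS : selfAdjEnd S) : (RicM S)ᵀ = RicM S := by
  ext i j
  simp only [transpose_apply, RicM, Rcoord, of_apply]
  exact Finset.sum_congr rfl fun k _ => by rw [hS, ip_comm]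

lemma Ric0_transpose {S : Module.End ℝ (so n)} (hS : selfAdjEnd S) : (Ric0 S)ᵀ = Ric0 S := by
  rw [Ric0, transpose_sub, transpose_smul, transpose_one, RicM_transpose hS]

lemma trace_Ric0 (hn : n ≠ 0) (S : Module.End ℝ (so n)) : trace (Ric0 S) = 0 := by
  rw [Ric0, lamb, trace_sub, trace_smul, trace_one, Fintype.card_fin, smul_eq_mul,
    div_mul_cancel₀ _ (Nat.cast_ne_zero.mpr hn), sub_self]

lemma sum_mul_bmat_mul_apply (P Q : Mat n) (i j : Fin n) :
    ∑ k, (P * bmat i k * Q) j k = P j i * trace Q - (P * Qᵀ) j i := by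
  simp only [mul_apply, bmat_apply, trace, diag, transpose_apply, mul_sub, sub_mul, mul_ite,
    ite_mul, ite_and, mul_one, mul_zero, zero_mul, Finset.sum_sub_distrib, Finset.sum_ite_eq',
    Finset.mem_univ, if_true, Finset.mul_sum]

lemma RicM_wedge {P Q : Mat n} (hP : Pᵀ = P) (hQ : Qᵀ = Q) :
    RicM (wedge P Q) = (1 / 2 : ℝ) • (trace Q • P + trace P • Q - P * Q - Q * P) := by
  ext i j
  have hswap : ∀ M N : Mat n, (M * N) j i = (Nᵀ * Mᵀ) i j := fun M N => by
    rw [← transpose_apply (M * N) i j, transpose_mul]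
  simp only [RicM_apply, coe_wedge_apply, Matrix.smul_apply, Matrix.add_apply, smul_eq_mul,
    ← Finset.mul_sum, Finset.sum_add_distrib, sum_mul_bmat_mul_apply, Matrix.sub_apply, hswap,
    hP, hQ]
  rw [← transpose_apply P, ← transpose_apply Q, hP, hQ]
  ring

lemma weylPart_wedge_one (hn : 3 ≤ n) {P : Mat n} (hP : Pᵀ = P) : weylPart (wedge P 1) = 0 := by
  have hn' : (3 : ℝ) ≤ n := by exact_mod_cast hn
  have hn0 : (n : ℝ) ≠ 0 := by linarith
  have hn1 : (n : ℝ) - 1 ≠ 0 := by linarith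
  have hn2 : (n : ℝ) - 2 ≠ 0 := by linarith
  have hric : RicM (wedge P 1) = (((n : ℝ) - 2) / 2) • P + (trace P / 2) • (1 : Mat n) := by
    rw [RicM_wedge hP transpose_one, trace_one, Fintype.card_fin, Matrix.mul_one, Matrix.one_mul]
    module
  have hlamb : lamb (wedge P 1) = ((n : ℝ) - 1) / n * trace P := by
    rw [lamb, hric, trace_add, trace_smul, trace_smul, trace_one, Fintype.card_fin]
    field_simp
    ring
  ext X : 2
  simp only [weylPart, RI, RRic0, Ric0, hric, hlamb, LinearMap.sub_apply, LinearMap.smul_apply,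
    LinearMap.zero_apply, Submodule.coe_sub, Submodule.coe_smul, Submodule.coe_zero,
    coe_wedge_apply, transpose_one, transpose_add, transpose_sub, transpose_smul, hP,
    Matrix.one_mul, Matrix.mul_one, Matrix.add_mul, Matrix.mul_add, Matrix.sub_mul,
    Matrix.mul_sub, Matrix.smul_mul, Matrix.mul_smul]
  match_scalars <;> field_simp <;> ring

lemma weylPart_add (S T : Module.End ℝ (so n)) :
    weylPart (S + T) = weylPart S + weylPart T := by
  ext X : 2
  simp only [weylPart, RI, RRic0, Ric0, lamb, RicM_add, LinearMap.add_apply,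
    LinearMap.sub_apply, LinearMap.smul_apply, Submodule.coe_add, Submodule.coe_sub,
    Submodule.coe_smul, coe_wedge_apply, trace_add, transpose_one, Matrix.one_mul,
    Matrix.mul_one, Matrix.add_mul, Matrix.mul_add, Matrix.sub_mul, Matrix.mul_sub,
    Matrix.smul_mul, Matrix.mul_smul, transpose_add, transpose_sub, transpose_smul]
  match_scalars <;> ring

lemma weylPart_smul (c : ℝ) (S : Module.End ℝ (so n)) : weylPart (c • S) = c • weylPart S := by
  ext X : 2
  simp only [weylPart, RI, RRic0, Ric0, lamb, RicM_smul, LinearMap.smul_apply,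
    LinearMap.sub_apply, Submodule.coe_sub, Submodule.coe_smul, coe_wedge_apply, trace_smul,
    transpose_one, Matrix.one_mul, Matrix.mul_one, Matrix.sub_mul, Matrix.mul_sub,
    Matrix.smul_mul, Matrix.mul_smul, transpose_sub, transpose_smul, smul_eq_mul]
  match_scalars <;> ring

lemma weylPart_sub (S T : Module.End ℝ (so n)) :
    weylPart (S - T) = weylPart S - weylPart T := by
  ext X : 2
  simp only [weylPart, RI, RRic0, Ric0, lamb, RicM_sub, LinearMap.sub_apply,
    LinearMap.smul_apply, Submodule.coe_sub, Submodule.coe_smul, coe_wedge_apply, trace_sub,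
    transpose_one, Matrix.one_mul, Matrix.mul_one, Matrix.sub_mul, Matrix.mul_sub,
    Matrix.smul_mul, Matrix.mul_smul, transpose_sub, transpose_smul]
  match_scalars <;> ring

/-- Lemma: the Weyl part of `R² + R^#` for a curvature operator of Ricci type. -/
theorem stmt_4 {n : ℕ} (hn : 4 ≤ n) (R : Module.End ℝ (so n)) (hR : isCurvOp R)
    (hRic : R = (lamb R / ((n : ℝ) - 1)) • wedge (1 : Mat n) (1 : Mat n)
        + (2 / ((n : ℝ) - 2)) • wedge (Ric0 R) (1 : Mat n)) :
    weylPart (Qode R) = (1 / ((n : ℝ) - 2)) • weylPart (wedge (Ric0 R) (Ric0 R)) := by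
  have hn3 : 3 ≤ n := by omega
  have hn2 : (n : ℝ) - 2 ≠ 0 := by
    have : (4 : ℝ) ≤ n := by exact_mod_cast hn
    linarith
  have hA := Ric0_transpose hR.1
  have hAA : (Ric0 R * Ric0 R)ᵀ = Ric0 R * Ric0 R := by rw [transpose_mul, hA]
  conv_lhs => rw [show R = ricciType (Ric0 R) _ _ from hRic]
  rw [Qode_ricciType hA (trace_Ric0 (by omega) R)]
  simp only [weylPart_sub, weylPart_add, weylPart_smul, weylPart_wedge_one hn3 transpose_one,
    weylPart_wedge_one hn3 hA, weylPart_wedge_one hn3 hAA, smul_zero, zero_add]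
  match_scalars
  field_simp
  ring

end BW
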